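/- arXiv:2506.11608 — 3 statements merged into one kernel-verified Lean document; each statement's English description precedes it below -/
import Mathlib

section
/- Let P be an n×n real symmetric positive semidefinite matrix, q, x̂ ∈ ℝ^n, A an m×n real matrix, z, y ∈ ℝ^m, σ > 0, and R an m×m diagonal matrix with strictly positive diagonal entries. If (x, ν) satisfies (P + σI)x + Aᵀν = σx̂ − q and Ax − R⁻¹ν = z − R⁻¹y, then x = (P + σI + AᵀRA)⁻¹ (Aᵀ(Rz − y) + σx̂ − q) and Ax = z + R⁻¹(ν − y). -/
/-! Eliminating `ν` from the second block row via `ν - y = R (A x - z)` and substituting into the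
first row gives `(P + σI + AᵀRA) x = Aᵀ(Rz - y) + σx̂ - q`; the matrix on the left is positive
definite, hence invertible. -/

open Matrix

section Elimination

variable {m n K : Type*} [Fintype m] [Fintype n] [CommRing K]

theorem mulVec_eq_add_mulVec_sub_of_mulVec_sub_eq {A : Matrix m n K} {D : Matrix m m K}
    {x : n → K} {ν z y : m → K} (h : A *ᵥ x - D *ᵥ ν = z - D *ᵥ y) :
    A *ᵥ x = z + D *ᵥ (ν - y) := by
  rw [mulVec_sub]
  linear_combination h

theorem add_transpose_mul_mul_mulVec_eq_of_block_system [DecidableEq m] {P : Matrix n n K}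
    {A : Matrix m n K} {R D : Matrix m m K} (hRD : R * D = 1) {x b : n → K} {ν z y : m → K}
    (h1 : P *ᵥ x + Aᵀ *ᵥ ν = b) (h2 : A *ᵥ x = z + D *ᵥ (ν - y)) :
    (P + Aᵀ * R * A) *ᵥ x = Aᵀ *ᵥ (R *ᵥ z - y) + b := by
  have hν : ν - y = R *ᵥ (A *ᵥ x - z) := by
    rw [h2, add_sub_cancel_left, mulVec_mulVec, hRD, one_mulVec]
  have hAν := congrArg (Aᵀ *ᵥ ·) hν
  simp only [mulVec_sub] at hAν
  rw [add_mulVec, ← mulVec_mulVec, ← mulVec_mulVec, mulVec_sub]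
  linear_combination h1 - hAν

end Elimination

theorem Matrix.PosSemidef.add_posDef_add_transpose_mul_mul {m n : Type*} [Fintype m] [Fintype n]
    {P S : Matrix n n ℝ} {R : Matrix m m ℝ} (hP : P.PosSemidef) (hS : S.PosDef)
    (hR : R.PosSemidef) (A : Matrix m n ℝ) : (P + S + Aᵀ * R * A).PosDef := by
  have hARA : (Aᵀ * R * A).PosSemidef := by
    simpa only [conjTranspose_eq_transpose_of_trivial] using hR.conjTranspose_mul_mul_same A
  exact (hS.posSemidef_add hP).add_posSemidef hARA

/-- The indirect method: if `(x, ν)` solves the symmetric block system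
`(P + σI)x + Aᵀν = σx̂ − q`, `Ax − R⁻¹ν = z − R⁻¹y`, then
`x = (P + σI + AᵀRA)⁻¹ (Aᵀ(Rz − y) + σx̂ − q)` and `Ax = z + R⁻¹(ν − y)`. -/
theorem stmt_6 {n m : ℕ} (P : Matrix (Fin n) (Fin n) ℝ) (q xhat : Fin n → ℝ)
    (A : Matrix (Fin m) (Fin n) ℝ) (z y : Fin m → ℝ) (σ : ℝ) (ρ : Fin m → ℝ)
    (hP : P.PosSemidef) (hσ : 0 < σ) (hρ : ∀ i, 0 < ρ i)
    (x : Fin n → ℝ) (ν : Fin m → ℝ)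
    (h1 : (P + σ • (1 : Matrix (Fin n) (Fin n) ℝ)).mulVec x + Aᵀ.mulVec ν = σ • xhat - q)
    (h2 : A.mulVec x - (Matrix.diagonal fun i => (ρ i)⁻¹).mulVec ν =
      z - (Matrix.diagonal fun i => (ρ i)⁻¹).mulVec y) :
    x = (P + σ • (1 : Matrix (Fin n) (Fin n) ℝ) + Aᵀ * Matrix.diagonal ρ * A)⁻¹.mulVec
        (Aᵀ.mulVec ((Matrix.diagonal ρ).mulVec z - y) + σ • xhat - q) ∧
      A.mulVec x = z + (Matrix.diagonal fun i => (ρ i)⁻¹).mulVec (ν - y) := by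
  have hRD : diagonal ρ * diagonal (fun i => (ρ i)⁻¹) = 1 := by
    rw [diagonal_mul_diagonal, ← diagonal_one]
    exact congrArg diagonal (funext fun i => mul_inv_cancel₀ (hρ i).ne')
  have hAx := mulVec_eq_add_mulVec_sub_of_mulVec_sub_eq h2
  have hM := hP.add_posDef_add_transpose_mul_mul (PosDef.one.smul hσ)
    (posSemidef_diagonal_iff.mpr fun i => (hρ i).le) A
  let := hM.isUnit.invertible
  refine ⟨(inv_mulVec_eq_vec ?_).symm, hAx⟩
  rw [add_sub_assoc, ← add_transpose_mul_mul_mulVec_eq_of_block_system hRD h1 hAx]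
end

section
/- Let P be an n×n real symmetric positive semidefinite matrix, q ∈ ℝ^n, A an m×n real matrix, and let the bounds be extended reals l, u ∈ (ℝ ∪ {−∞, +∞})^m; call x feasible if l_i ≤ (Ax)_i ≤ u_i for every i. Define f(x) := (1/2)xᵀPx + qᵀx. Suppose δx ∈ ℝ^n satisfies Pδx = 0, qᵀδx < 0, and for each i: (Aδx)_i = 0 whenever l_i and u_i are both finite, (Aδx)_i ≥ 0 whenever u_i = +∞ and l_i is finite, and (Aδx)_i ≤ 0 whenever l_i = −∞ and u_i is finite. Then for every feasible x and every t ≥ 0, x + tδx is feasible and f(x + tδx) = f(x) + t·qᵀδx; consequently f is unbounded below on the feasible set whenever it is nonempty. -/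
/-!
Since `P δx = 0` and `P` is symmetric, the quadratic part of `f` is constant along `δx`, so
`t ↦ f (x + t • δx)` is affine with slope `qᵀ δx < 0`. For a feasible `x`, the sign conditions
on `A δx` say that `(A δx)ᵢ ≥ 0` whenever `lᵢ` is finite and `(A δx)ᵢ ≤ 0` whenever `uᵢ` is
finite (a feasible `x` rules out `lᵢ = +∞` and `uᵢ = −∞`), so no finite bound is ever crossed.
-/

open scoped Matrix
open Filter

namespace EReal

theorem le_coe_add_mul {l : EReal} {a d t : ℝ} (hl : l ≤ a) (hd : l ≠ ⊥ → 0 ≤ d) (ht : 0 ≤ t) :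
    l ≤ ((a + t * d : ℝ) : EReal) := by
  rcases eq_or_ne l ⊥ with rfl | hl_bot
  · exact bot_le
  · exact hl.trans (EReal.coe_le_coe_iff.mpr (le_add_of_nonneg_right (mul_nonneg ht (hd hl_bot))))

theorem coe_add_mul_le {u : EReal} {a d t : ℝ} (hu : (a : EReal) ≤ u) (hd : u ≠ ⊤ → d ≤ 0)
    (ht : 0 ≤ t) : ((a + t * d : ℝ) : EReal) ≤ u := by
  rcases eq_or_ne u ⊤ with rfl | hu_top
  · exact le_top
  · exact (EReal.coe_le_coe_iff.mpr
      (add_le_of_nonpos_right (mul_nonpos_of_nonneg_of_nonpos ht (hd hu_top)))).trans hu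

theorem coe_add_mul_mem_Icc {l u : EReal} {a d t : ℝ} (ha : (a : EReal) ∈ Set.Icc l u)
    (hfin : (l ≠ ⊥ ∧ l ≠ ⊤) → (u ≠ ⊥ ∧ u ≠ ⊤) → d = 0)
    (hup : u = ⊤ → (l ≠ ⊥ ∧ l ≠ ⊤) → 0 ≤ d)
    (hlo : l = ⊥ → (u ≠ ⊥ ∧ u ≠ ⊤) → d ≤ 0) (ht : 0 ≤ t) :
    ((a + t * d : ℝ) : EReal) ∈ Set.Icc l u := by
  have hl_top : l ≠ ⊤ := ne_top_of_le_ne_top (coe_ne_top a) ha.1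
  have hu_bot : u ≠ ⊥ := ne_bot_of_le_ne_bot (coe_ne_bot a) ha.2
  have hd_nonneg : l ≠ ⊥ → 0 ≤ d := fun hl_bot ↦ by
    rcases eq_or_ne u ⊤ with hu_top | hu_top
    · exact hup hu_top ⟨hl_bot, hl_top⟩
    · exact (hfin ⟨hl_bot, hl_top⟩ ⟨hu_bot, hu_top⟩).ge
  have hd_nonpos : u ≠ ⊤ → d ≤ 0 := fun hu_top ↦ by
    rcases eq_or_ne l ⊥ with hl_bot | hl_bot
    · exact hlo hl_bot ⟨hu_bot, hu_top⟩
    · exact (hfin ⟨hl_bot, hl_top⟩ ⟨hu_bot, hu_top⟩).le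
  exact ⟨le_coe_add_mul ha.1 hd_nonneg ht, coe_add_mul_le ha.2 hd_nonpos ht⟩

end EReal

theorem Matrix.IsSymm.add_smul_dotProduct_mulVec_add_smul {ι R : Type*} [Fintype ι] [CommRing R]
    {P : Matrix ι ι R} (hP : P.IsSymm) {d : ι → R} (hd : P *ᵥ d = 0) (x : ι → R) (t : R) :
    (x + t • d) ⬝ᵥ P *ᵥ (x + t • d) = x ⬝ᵥ P *ᵥ x := by
  have hdP : d ⬝ᵥ P *ᵥ x = 0 := by
    rw [Matrix.dotProduct_mulVec, ← Matrix.mulVec_transpose, hP.eq, hd, zero_dotProduct]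
  rw [Matrix.mulVec_add, Matrix.mulVec_smul, hd, smul_zero, add_zero, add_dotProduct,
    smul_dotProduct, hdP, smul_zero, add_zero]

theorem exists_nonneg_add_mul_lt {a b : ℝ} (hb : b < 0) (c : ℝ) : ∃ t, 0 ≤ t ∧ a + t * b < c := by
  have h : Tendsto (fun t ↦ a + t * b) atTop atBot :=
    tendsto_atBot_add_const_left _ a (tendsto_id.atTop_mul_const_of_neg hb)
  exact ((eventually_ge_atTop 0).and (h.eventually (eventually_lt_atBot c))).exists

/-- Dual infeasibility certificate with possibly infinite bounds
`l, u ∈ (ℝ ∪ {−∞, +∞})^m` (modeled as `EReal`): if `Pδx = 0`, `qᵀδx < 0`, and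
`(Aδx)_i = 0` when both bounds are finite, `(Aδx)_i ≥ 0` when `u_i = +∞` and `l_i`
is finite, `(Aδx)_i ≤ 0` when `l_i = −∞` and `u_i` is finite, then the ray `x + tδx`
stays feasible with linearly decreasing cost, hence the QP is unbounded below on a
nonempty feasible set. -/
theorem stmt_10 {n m : ℕ} (P : Matrix (Fin n) (Fin n) ℝ) (q : Fin n → ℝ)
    (A : Matrix (Fin m) (Fin n) ℝ) (l u : Fin m → EReal)
    (hP : P.PosSemidef)
    (f : (Fin n → ℝ) → ℝ)
    (hf : ∀ x, f x = (1 / 2) * (x ⬝ᵥ P.mulVec x) + q ⬝ᵥ x)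
    (feasible : (Fin n → ℝ) → Prop)
    (hfeas : ∀ x, feasible x ↔ ∀ i, l i ≤ (A.mulVec x i : EReal) ∧ (A.mulVec x i : EReal) ≤ u i)
    (δx : Fin n → ℝ)
    (hPδ : P.mulVec δx = 0) (hqδ : q ⬝ᵥ δx < 0)
    (hfin : ∀ i, (l i ≠ ⊥ ∧ l i ≠ ⊤) → (u i ≠ ⊥ ∧ u i ≠ ⊤) → A.mulVec δx i = 0)
    (hup : ∀ i, u i = ⊤ → (l i ≠ ⊥ ∧ l i ≠ ⊤) → 0 ≤ A.mulVec δx i)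
    (hlo : ∀ i, l i = ⊥ → (u i ≠ ⊥ ∧ u i ≠ ⊤) → A.mulVec δx i ≤ 0) :
    (∀ x : Fin n → ℝ, feasible x → ∀ t : ℝ, 0 ≤ t →
        feasible (x + t • δx) ∧ f (x + t • δx) = f x + t * (q ⬝ᵥ δx)) ∧
      ((∃ x, feasible x) → ∀ c : ℝ, ∃ x, feasible x ∧ f x < c) := by
  have hsymm : P.IsSymm := Matrix.isHermitian_iff_isSymm.mp hP.isHermitian
  have ray : ∀ x, feasible x → ∀ t : ℝ, 0 ≤ t →
      feasible (x + t • δx) ∧ f (x + t • δx) = f x + t * (q ⬝ᵥ δx) := by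
    intro x hx t ht
    refine ⟨(hfeas _).mpr fun i ↦ ?_, ?_⟩
    · rw [Matrix.mulVec_add, Matrix.mulVec_smul, Pi.add_apply, Pi.smul_apply, smul_eq_mul]
      exact EReal.coe_add_mul_mem_Icc ((hfeas x).mp hx i) (hfin i) (hup i) (hlo i) ht
    · rw [hf, hf, hsymm.add_smul_dotProduct_mulVec_add_smul hPδ, dotProduct_add, dotProduct_smul,
        smul_eq_mul]
      ring
  refine ⟨ray, ?_⟩
  rintro ⟨x, hx⟩ c
  obtain ⟨t, ht, hlt⟩ := exists_nonneg_add_mul_lt (a := f x) hqδ c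
  obtain ⟨hfeas_t, hf_t⟩ := ray x hx t ht
  exact ⟨x + t • δx, hfeas_t, hf_t ▸ hlt⟩
end

section
/- Let P be an n×n real symmetric positive semidefinite matrix, q ∈ ℝ^n, A an m×n real matrix, l, u ∈ ℝ^m with l ≤ u, σ ≥ 0, and R an m×m diagonal matrix with strictly positive diagonal entries. Suppose (x, z, y) ∈ ℝ^n × ℝ^m × ℝ^m is a fixed point of the superADMM iteration, i.e.: 0 = Px + q + Aᵀy + AᵀR(Ax − z) + σ(x − x) (stationarity of the x-update with x^k = x), z = Π_{[l,u]}(Ax + R⁻¹y), and y = y + R(Ax − z). Then Ax = z, l ≤ Ax ≤ u, Px + q + Aᵀy = 0, and x is a global minimizer of (1/2)xᵀPx + qᵀx over {x : l ≤ Ax ≤ u}. -/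
open scoped Matrix

/-!
At a fixed point the dual update forces `R (Ax - z) = 0`, hence `Ax = z` since `R` is positive
diagonal; the stationarity condition then reduces to the KKT equation `Px + q + Aᵀy = 0`, and the
projection step places `z` in the box `[l, u]`. Moreover `z = Π_{[l,u]}(z + R⁻¹y)` is the
variational inequality of the projection onto the box, so `yᵀ(w - z) ≤ 0` for every `w ∈ [l, u]`.
Taking `w = Ax'` for feasible `x'`, the gradient `Px + q = -Aᵀy` makes a nonnegative angle with
`x' - x`, and convexity of the quadratic objective gives global optimality.
-/

theorem mul_sub_nonpos_of_eq_max_min {α : Type*} [Ring α] [LinearOrder α]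
    [IsStrictOrderedRing α] {l u z t w : α} (hz : z = max l (min u (z + t)))
    (hlw : l ≤ w) (hwu : w ≤ u) : t * (w - z) ≤ 0 := by
  rcases lt_trichotomy t 0 with ht | rfl | ht
  · have hzl : z = l := by
      have hm : min u (z + t) < z := (min_le_right _ _).trans_lt (add_lt_of_neg_right z ht)
      rcases max_choice l (min u (z + t)) with h | h
      · exact hz.trans h
      · exact absurd (hz.trans h) hm.ne'
    exact mul_nonpos_of_nonpos_of_nonneg ht.le (sub_nonneg.mpr (hzl ▸ hlw))
  · simp
  · have huz : u ≤ z := by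
      have : min u (z + t) ≤ z := (le_max_right _ _).trans_eq hz.symm
      exact (min_le_iff.mp this).resolve_right (lt_add_of_pos_right z ht).not_ge
    exact mul_nonpos_of_nonneg_of_nonpos ht.le (sub_nonpos.mpr (hwu.trans huz))

theorem dotProduct_sub_nonpos_of_eq_clamp {m 𝕜 : Type*} [Fintype m] [Field 𝕜] [LinearOrder 𝕜]
    [IsStrictOrderedRing 𝕜] {l u z y ρ w : m → 𝕜}
    (hρ : ∀ i, 0 < ρ i) (hz : ∀ i, z i = max (l i) (min (u i) (z i + y i / ρ i)))
    (hlw : l ≤ w) (hwu : w ≤ u) : y ⬝ᵥ (w - z) ≤ 0 := by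
  refine Finset.sum_nonpos fun i _ => ?_
  have h := mul_sub_nonpos_of_eq_max_min (hz i) (hlw i) (hwu i)
  calc y i * (w - z) i = ρ i * (y i / ρ i * (w i - z i)) := by
        rw [Pi.sub_apply, ← mul_assoc, mul_div_cancel₀ _ (hρ i).ne']
    _ ≤ 0 := mul_nonpos_of_nonneg_of_nonpos (hρ i).le h

theorem eq_of_diagonal_mulVec_sub_eq_zero {m R : Type*} [Fintype m] [DecidableEq m] [Ring R]
    [NoZeroDivisors R] {ρ v w : m → R} (hρ : ∀ i, ρ i ≠ 0) (h : Matrix.diagonal ρ *ᵥ (v - w) = 0) : v = w := by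
  funext i
  have := congrFun h i
  rw [Matrix.mulVec_diagonal, Pi.zero_apply, mul_eq_zero] at this
  exact sub_eq_zero.mp (this.resolve_left (hρ i))

theorem Matrix.PosSemidef.quadratic_le_of_dotProduct_grad_nonneg {n : Type*} [Fintype n]
    {P : Matrix n n ℝ} (hP : P.PosSemidef) (q : n → ℝ) {x x' : n → ℝ}
    (h : 0 ≤ (x' - x) ⬝ᵥ (P *ᵥ x + q)) :
    (1 / 2) * (x ⬝ᵥ P *ᵥ x) + q ⬝ᵥ x ≤ (1 / 2) * (x' ⬝ᵥ P *ᵥ x') + q ⬝ᵥ x' := by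
  obtain ⟨d, rfl⟩ : ∃ d, x' = x + d := ⟨x' - x, (add_sub_cancel x x').symm⟩
  rw [add_sub_cancel_left] at h
  have hsymm : x ⬝ᵥ P *ᵥ d = d ⬝ᵥ P *ᵥ x := by
    rw [Matrix.dotProduct_mulVec, ← Matrix.mulVec_transpose,
      ← Matrix.conjTranspose_eq_transpose_of_trivial, hP.1.eq, dotProduct_comm]
  have hexpand : (1 / 2) * ((x + d) ⬝ᵥ P *ᵥ (x + d)) + q ⬝ᵥ (x + d) =
      (1 / 2) * (x ⬝ᵥ P *ᵥ x) + q ⬝ᵥ x + d ⬝ᵥ (P *ᵥ x + q) + (1 / 2) * (d ⬝ᵥ P *ᵥ d) := by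
    rw [Matrix.mulVec_add, dotProduct_add, add_dotProduct, add_dotProduct, hsymm,
      dotProduct_add, dotProduct_add, dotProduct_comm q d]
    ring
  have hcurv : 0 ≤ d ⬝ᵥ P *ᵥ d := by simpa using hP.dotProduct_mulVec_nonneg d
  linarith

theorem stmt_13_general {n m : ℕ} (P : Matrix (Fin n) (Fin n) ℝ) (q : Fin n → ℝ)
    (A : Matrix (Fin m) (Fin n) ℝ) (l u : Fin m → ℝ) (σ : ℝ) (ρ : Fin m → ℝ)
    (hP : P.PosSemidef) (hρ : ∀ i, 0 < ρ i) (hlu : l ≤ u)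
    (x : Fin n → ℝ) (z y : Fin m → ℝ)
    (hstat : 0 = P.mulVec x + q + Aᵀ.mulVec y +
      Aᵀ.mulVec ((Matrix.diagonal ρ).mulVec (A.mulVec x - z)) + σ • (x - x))
    (hzfix : ∀ i, z i = max (l i) (min (u i) (A.mulVec x i + y i / ρ i)))
    (hyfix : y = y + (Matrix.diagonal ρ).mulVec (A.mulVec x - z)) :
    A.mulVec x = z ∧ (l ≤ A.mulVec x ∧ A.mulVec x ≤ u) ∧
      P.mulVec x + q + Aᵀ.mulVec y = 0 ∧
      (∀ x' : Fin n → ℝ, l ≤ A.mulVec x' → A.mulVec x' ≤ u →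
        (1 / 2) * (x ⬝ᵥ P.mulVec x) + q ⬝ᵥ x ≤
          (1 / 2) * (x' ⬝ᵥ P.mulVec x') + q ⬝ᵥ x') := by
  have hAz : A *ᵥ x = z :=
    eq_of_diagonal_mulVec_sub_eq_zero (fun i => (hρ i).ne') (left_eq_add.mp hyfix)
  have hKKT : P *ᵥ x + q + Aᵀ *ᵥ y = 0 := by
    simpa [hAz] using hstat.symm
  rw [hAz] at hzfix ⊢
  refine ⟨rfl, ⟨fun i => hzfix i ▸ le_max_left _ _,
    fun i => hzfix i ▸ max_le (hlu i) (min_le_left _ _)⟩, hKKT, fun x' hl' hu' => ?_⟩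
  refine hP.quadratic_le_of_dotProduct_grad_nonneg q ?_
  have hcomp := dotProduct_sub_nonpos_of_eq_clamp hρ hzfix hl' hu'
  rw [eq_neg_of_add_eq_zero_left hKKT, dotProduct_neg, Matrix.dotProduct_mulVec,
    Matrix.vecMul_transpose, Matrix.mulVec_sub, hAz, dotProduct_comm]
  linarith

/-- A fixed point `(x, z, y)` of the superADMM iteration (stationarity
of the x-update, projection z-update, and dual update) satisfies `Ax = z`,
`l ≤ Ax ≤ u`, `Px + q + Aᵀy = 0`, and `x` is a global minimizer of the QP. -/
theorem stmt_13 {n m : ℕ} (P : Matrix (Fin n) (Fin n) ℝ) (q : Fin n → ℝ)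
    (A : Matrix (Fin m) (Fin n) ℝ) (l u : Fin m → ℝ) (σ : ℝ) (ρ : Fin m → ℝ)
    (hP : P.PosSemidef) (hσ : 0 ≤ σ) (hρ : ∀ i, 0 < ρ i) (hlu : l ≤ u)
    (x : Fin n → ℝ) (z y : Fin m → ℝ)
    (hstat : 0 = P.mulVec x + q + Aᵀ.mulVec y +
      Aᵀ.mulVec ((Matrix.diagonal ρ).mulVec (A.mulVec x - z)) + σ • (x - x))
    (hzfix : ∀ i, z i = max (l i) (min (u i) (A.mulVec x i + y i / ρ i)))
    (hyfix : y = y + (Matrix.diagonal ρ).mulVec (A.mulVec x - z)) :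
    A.mulVec x = z ∧ (l ≤ A.mulVec x ∧ A.mulVec x ≤ u) ∧
      P.mulVec x + q + Aᵀ.mulVec y = 0 ∧
      (∀ x' : Fin n → ℝ, l ≤ A.mulVec x' → A.mulVec x' ≤ u →
        (1 / 2) * (x ⬝ᵥ P.mulVec x) + q ⬝ᵥ x ≤
          (1 / 2) * (x' ⬝ᵥ P.mulVec x') + q ⬝ᵥ x') :=
  stmt_13_general P q A l u σ ρ hP hρ hlu x z y hstat hzfix hyfix
end
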